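/- arXiv:1306.1362 — 2 statements merged into one kernel-verified Lean document; each statement's English description precedes it below -/
import Mathlib

section
/- Under the same hypotheses, (α₂² + β₂²)/(α₁² + β₁²) = (−aμ − εν + κ)/(aμ − εν + κ). -/
/-!
Write `s = √(1+ε)`, `t = √(1-ε)`, so `s² + t² = 2` and `st = a`. Then
`α₁² + β₁² = 2((κ-ν)s + μt)²`, and expanding with `μ² = (κ-ν)(κ+ν)` gives
`4(κ-ν)(aμ - εν + κ)`; the pair `α₂, β₂` is the same expression with `μ` replaced by `-μ`.
The common factor `4(κ-ν)` cancels because `κ = ν` would force `μ = 0`.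
-/

lemma sqrt_one_add_mul_sqrt_one_sub {ε a : ℝ} (hε : -1 ≤ ε) (ha : 0 ≤ a)
    (ha2 : a ^ 2 = 1 - ε ^ 2) : Real.sqrt (1 + ε) * Real.sqrt (1 - ε) = a := by
  rw [← Real.sqrt_mul (by linarith), show (1 + ε) * (1 - ε) = a ^ 2 by linarith,
    Real.sqrt_sq ha]

lemma sub_ne_zero_of_sq_eq_sq_add_sq {κ μ ν : ℝ} (hκ : κ ^ 2 = μ ^ 2 + ν ^ 2) (hμ : μ ≠ 0) :
    κ - ν ≠ 0 := by
  intro h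
  rw [sub_eq_zero.mp h, right_eq_add, sq_eq_zero_iff] at hκ
  exact hμ hκ

lemma sq_add_sq_eq_four_mul {ε κ m ν a s t : ℝ} (hs : s ^ 2 = 1 + ε) (ht : t ^ 2 = 1 - ε)
    (hst : s * t = a) (hκ : κ ^ 2 = m ^ 2 + ν ^ 2) :
    (s * ((κ - ν) * s + m * t)) ^ 2 + (t * ((κ - ν) * s + m * t)) ^ 2 =
      4 * (κ - ν) * (a * m - ε * ν + κ) := by
  linear_combination (((κ - ν) * s + m * t) ^ 2 + 2 * (κ - ν) ^ 2) * hs +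
    (((κ - ν) * s + m * t) ^ 2 + 2 * m ^ 2) * ht + 4 * (κ - ν) * m * hst - 2 * (1 - ε) * hκ

theorem q2_value_general (ε κ μ ν a α₁ α₂ β₁ β₂ : ℝ)
    (hε1 : -1 < ε) (hε2 : ε < 1)
    (hκ : κ ^ 2 = μ ^ 2 + ν ^ 2) (ha2 : a ^ 2 = 1 - ε ^ 2)
    (ha : 0 < a) (hμ : 0 < μ)
    (hα₁ : α₁ = Real.sqrt (1 + ε) * ((κ - ν) * Real.sqrt (1 + ε) + μ * Real.sqrt (1 - ε)))
    (hα₂ : α₂ = -(Real.sqrt (1 + ε) * ((κ - ν) * Real.sqrt (1 + ε) - μ * Real.sqrt (1 - ε))))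
    (hβ₁ : β₁ = Real.sqrt (1 - ε) * ((κ - ν) * Real.sqrt (1 + ε) + μ * Real.sqrt (1 - ε)))
    (hβ₂ : β₂ = Real.sqrt (1 - ε) * ((κ - ν) * Real.sqrt (1 + ε) - μ * Real.sqrt (1 - ε))) :
    (α₂ ^ 2 + β₂ ^ 2) / (α₁ ^ 2 + β₁ ^ 2) =
      (-(a * μ) - ε * ν + κ) / (a * μ - ε * ν + κ) := by
  have hs : Real.sqrt (1 + ε) ^ 2 = 1 + ε := Real.sq_sqrt (by linarith)
  have ht : Real.sqrt (1 - ε) ^ 2 = 1 - ε := Real.sq_sqrt (by linarith)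
  have hst := sqrt_one_add_mul_sqrt_one_sub hε1.le ha.le ha2
  have hden : α₁ ^ 2 + β₁ ^ 2 = 4 * (κ - ν) * (a * μ - ε * ν + κ) := by
    rw [hα₁, hβ₁]
    exact sq_add_sq_eq_four_mul hs ht hst hκ
  have hnum : α₂ ^ 2 + β₂ ^ 2 = 4 * (κ - ν) * (a * -μ - ε * ν + κ) := by
    rw [hα₂, hβ₂, neg_sq, sub_eq_add_neg (_ * _) (μ * _), ← neg_mul]
    exact sq_add_sq_eq_four_mul hs ht hst (by rwa [neg_sq])
  rw [hnum, hden, mul_neg, mul_div_mul_left _ _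
    (mul_ne_zero four_ne_zero (sub_ne_zero_of_sq_eq_sq_add_sq hκ hμ.ne'))]

theorem q2_value (ε κ μ ν a n α₁ α₂ β₁ β₂ : ℝ)
    (hε1 : -1 < ε) (hε2 : ε < 1)
    (hκ : κ ^ 2 = μ ^ 2 + ν ^ 2) (ha2 : a ^ 2 = 1 - ε ^ 2)
    (hεμ : ε * μ = a * (ν + n)) (ha : 0 < a) (hμ : 0 < μ)
    (hden : a * μ - ε * ν + κ ≠ 0)
    (hα₁ : α₁ = Real.sqrt (1 + ε) * ((κ - ν) * Real.sqrt (1 + ε) + μ * Real.sqrt (1 - ε)))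
    (hα₂ : α₂ = -(Real.sqrt (1 + ε) * ((κ - ν) * Real.sqrt (1 + ε) - μ * Real.sqrt (1 - ε))))
    (hβ₁ : β₁ = Real.sqrt (1 - ε) * ((κ - ν) * Real.sqrt (1 + ε) + μ * Real.sqrt (1 - ε)))
    (hβ₂ : β₂ = Real.sqrt (1 - ε) * ((κ - ν) * Real.sqrt (1 + ε) - μ * Real.sqrt (1 - ε))) :
    (α₂ ^ 2 + β₂ ^ 2) / (α₁ ^ 2 + β₁ ^ 2) =
      (-(a * μ) - ε * ν + κ) / (a * μ - ε * ν + κ) :=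
  q2_value_general ε κ μ ν a α₁ α₂ β₁ β₂ hε1 hε2 hκ ha2 ha hμ hα₁ hα₂ hβ₁ hβ₂
end

section
/- The generalized Laguerre polynomial y(x) = L_n^{(a)}(x) satisfies the differential equation x·y''(x) + (a + 1 − x)·y'(x) + n·y(x) = 0 for all real x. -/
/-!
`L_n^{(a)}` is a polynomial whose coefficients satisfy
`(k + 1) (k + a + 1) c_{k+1} + (n - k) c_k = 0`. Comparing coefficients of `x^k` shows that this
recurrence is exactly what makes a polynomial solve Kummer's equation
`x y'' + (b - x) y' + ν y = 0`, here with `b = a + 1` and `ν = n`.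
-/

noncomputable def laguerreL (n : ℕ) (a x : ℝ) : ℝ :=
  ∑ k ∈ Finset.range (n + 1), (-1 : ℝ) ^ k *
    ((∏ i ∈ Finset.range (n - k), ((n : ℝ) + a - i)) / (Nat.factorial (n - k))) *
    x ^ k / (Nat.factorial k)

open Polynomial Finset

theorem Polynomial.kummer_equation_of_coeff_recurrence {R : Type*} [CommRing R] (p : R[X])
    (b ν : R) (h : ∀ k : ℕ, ((k : R) + 1) * (k + b) * p.coeff (k + 1) + (ν - k) * p.coeff k = 0) :
    X * derivative (derivative p) + (C b - X) * derivative p + C ν * p = 0 := by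
  ext k
  cases k with
  | zero => simpa [coeff_derivative, mul_comm, add_comm] using h 0
  | succ k =>
    simp only [coeff_add, coeff_X_mul, sub_mul, coeff_sub, coeff_C_mul, coeff_derivative,
      coeff_zero]
    linear_combination (norm := skip) h (k + 1)
    push_cast
    ring

-- Only meaningful for `k ≤ n`: for `k > n` the truncated `n - k` gives `± 1 / k!`, not `0`.
noncomputable def laguerreCoeff (n : ℕ) (a : ℝ) (k : ℕ) : ℝ :=
  (-1) ^ k * (∏ i ∈ range (n - k), ((n : ℝ) + a - i)) / (n - k).factorial / k.factorial

noncomputable def laguerrePoly (n : ℕ) (a : ℝ) : ℝ[X] :=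
  ∑ k ∈ range (n + 1), C (laguerreCoeff n a k) * X ^ k

theorem laguerrePoly_eval (n : ℕ) (a x : ℝ) : (laguerrePoly n a).eval x = laguerreL n a x := by
  simp only [laguerrePoly, laguerreL, laguerreCoeff, eval_finsetSum, eval_mul, eval_C, eval_pow,
    eval_X]
  refine sum_congr rfl fun k _ => ?_
  ring

theorem laguerrePoly_coeff (n : ℕ) (a : ℝ) (k : ℕ) :
    (laguerrePoly n a).coeff k = if k ≤ n then laguerreCoeff n a k else 0 := by
  simp [laguerrePoly]

theorem laguerreCoeff_recurrence {n k : ℕ} (a : ℝ) (hk : k < n) :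
    ((k : ℝ) + 1) * (k + (a + 1)) * laguerreCoeff n a (k + 1) +
      (n - k) * laguerreCoeff n a k = 0 := by
  obtain ⟨m, rfl⟩ := Nat.exists_eq_add_of_lt hk
  have hsub : k + m + 1 - k = m + 1 := by omega
  have hsub' : k + m + 1 - (k + 1) = m := by omega
  simp only [laguerreCoeff, hsub, hsub', prod_range_succ, Nat.factorial_succ]
  push_cast
  field_simp
  ring

theorem laguerrePoly_coeff_recurrence (n : ℕ) (a : ℝ) (k : ℕ) :
    ((k : ℝ) + 1) * (k + (a + 1)) * (laguerrePoly n a).coeff (k + 1) +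
      (n - k) * (laguerrePoly n a).coeff k = 0 := by
  simp only [laguerrePoly_coeff]
  rcases lt_trichotomy k n with hk | rfl | hk
  · simpa [hk.le, Nat.succ_le_of_lt hk] using laguerreCoeff_recurrence a hk
  · simp
  · simp [hk.not_ge, (hk.trans (Nat.lt_succ_self k)).not_ge]

theorem laguerre_ode (n : ℕ) (a x : ℝ) :
    x * deriv (deriv (fun t => laguerreL n a t)) x +
      (a + 1 - x) * deriv (fun t => laguerreL n a t) x + (n : ℝ) * laguerreL n a x = 0 := by
  have hL : (fun t => laguerreL n a t) = fun t => (laguerrePoly n a).eval t :=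
    funext fun t => (laguerrePoly_eval n a t).symm
  have hderiv (p : ℝ[X]) : deriv (fun t => p.eval t) = fun t => p.derivative.eval t :=
    funext fun t => p.deriv
  have hODE := congrArg (eval x) <|
    (laguerrePoly n a).kummer_equation_of_coeff_recurrence (a + 1) n
      (laguerrePoly_coeff_recurrence n a)
  simp only [eval_add, eval_mul, eval_sub, eval_X, eval_C, eval_zero, laguerrePoly_eval] at hODE
  rw [hL, hderiv, hderiv]
  exact hODE
end
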